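/- arXiv:1303.4536 — 9 statements merged into one kernel-verified Lean document; each statement's English description precedes it below -/
import Mathlib

section
/- The array F is an associated magic square of order n: the values F(r,c) for r,c ∈ {1,…,n} are exactly the numbers 1,2,…,n² each occurring once; every row sum, every column sum, and both main diagonal sums equal n(n²+1)/2; and F(r,c) + F(n+1−r, n+1−c) = n²+1 for all r, c ∈ {1,…,n}. -/
/-- Base array of the doubly-even construction: for `1 ≤ k ≤ n/2`,
if `k` is odd then `B r k = (k-1)n + r` and `B r (n+1-k) = 2p - kn + r`;
if `k` is even then `B r k = kn + 1 - r` and `B r (n+1-k) = 2p - (k-1)n + 1 - r`,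
where `p = n²/2`. -/
def B (n r c : ℕ) : ℕ :=
  if c ≤ n / 2 then
    if Odd c then (c - 1) * n + r else c * n + 1 - r
  else
    if Odd (n + 1 - c) then 2 * (n ^ 2 / 2) - (n + 1 - c) * n + r
    else 2 * (n ^ 2 / 2) - (n + 1 - c - 1) * n + 1 - r

/-- The set of rows to be swapped:
`S = {r : 1 ≤ r ≤ n, r even, r ≤ n/2} ∪ {r : 1 ≤ r ≤ n, r odd, n/2 < r ≤ n-1}`. -/
def S (n r : ℕ) : Prop :=
  1 ≤ r ∧ r ≤ n ∧ ((Even r ∧ r ≤ n / 2) ∨ (Odd r ∧ n / 2 < r ∧ r ≤ n - 1))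

instance (n r : ℕ) : Decidable (S n r) := by unfold S; infer_instance

/-- The final array: `F r c = B r (n+1-c)` if `r ∈ S`, and `F r c = B r c` otherwise. -/
def F (n r c : ℕ) : ℕ := if S n r then B n r (n + 1 - c) else B n r c

/-! Column `k` of `B` is the block `(k-1)n+1, …, kn`, read downwards or upwards, so
`F r c = (k - 1) n + o` with `k = sourceCol n r c` the column of `B` that `F` reads and
`o = offset n c r ∈ [1, n]` the position of row `r` in that block. The pair `(k, o)` determines
`(r, c)`, hence the bijection. The central reflection sends `k ↦ n+1-k` and `o ↦ n+1-o`, which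
is the associated property; summed over a diagonal it gives the diagonal sums. When `4 ∣ n`, the
columns `2i+1` and `2i+2` are read in opposite directions and exactly one of the rows `2i+1`,
`2i+2` lies in `S`, so along a row the offsets, and down a column the block indices, pair up to
constant sums. -/

open Finset

section SumLemmas

variable {M : Type*} [AddCommMonoid M]

theorem sum_Icc_eq_nsmul_of_pairs {n : ℕ} (hn : 2 ∣ n) (f : ℕ → M) (K : M)
    (h : ∀ i, 2 * i + 2 ≤ n → f (2 * i + 1) + f (2 * i + 2) = K) :
    ∑ c ∈ Icc 1 n, f c = (n / 2) • K := by
  obtain ⟨m, rfl⟩ := hn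
  rw [Nat.mul_div_cancel_left m two_pos]
  induction m with
  | zero => simp
  | succ m ih =>
    rw [show 2 * (m + 1) = 2 * m + 1 + 1 by ring, sum_Icc_succ_top (by omega),
      sum_Icc_succ_top (by omega), ih fun i hi => h i (by omega), succ_nsmul, add_assoc,
      ← h m (by omega)]

theorem sum_Icc_reflect (n : ℕ) (f : ℕ → M) :
    ∑ r ∈ Icc 1 n, f (n + 1 - r) = ∑ r ∈ Icc 1 n, f r :=
  sum_nbij' (fun r => n + 1 - r) (fun r => n + 1 - r)
    (fun r hr => by simp only [mem_Icc] at hr ⊢; omega)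
    (fun r hr => by simp only [mem_Icc] at hr ⊢; omega)
    (fun r hr => by simp only [mem_Icc] at hr; omega)
    (fun r hr => by simp only [mem_Icc] at hr; omega)
    (fun _ _ => rfl)

theorem two_nsmul_sum_Icc_of_reflect {n : ℕ} (f : ℕ → M) (K : M)
    (h : ∀ r ∈ Icc 1 n, f r + f (n + 1 - r) = K) :
    2 • ∑ r ∈ Icc 1 n, f r = n • K := by
  rw [two_nsmul]
  nth_rw 2 [← sum_Icc_reflect]
  rw [← sum_add_distrib, sum_congr rfl h, sum_const, Nat.card_Icc, Nat.add_sub_cancel]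

end SumLemmas

theorem sub_one_mul_add_sub_one_mul {n k k' : ℕ} (hk : 1 ≤ k) (hk' : 1 ≤ k')
    (h : k + k' = n + 1) :
    (k - 1) * n + (k' - 1) * n = (n - 1) * n := by
  rw [← add_mul]; congr 1; omega

theorem sub_one_mul_self_add (n : ℕ) : (n - 1) * n + (n + 1) = n ^ 2 + 1 := by
  cases n <;> simp; ring

theorem mul_add_inj_of_le {n a a' o o' : ℕ} (ho : 1 ≤ o) (hon : o ≤ n) (ho' : 1 ≤ o')
    (hon' : o' ≤ n) (h : a * n + o = a' * n + o') : a = a' ∧ o = o' := by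
  have digits : ∀ a o, 1 ≤ o → o ≤ n →
      (a * n + o - 1) / n = a ∧ (a * n + o - 1) % n = o - 1 :=
    fun a o h1 h2 => (Nat.div_mod_unique (by omega)).2 ⟨by rw [mul_comm]; omega, by omega⟩
  obtain ⟨hd, hm⟩ := digits a o ho hon
  obtain ⟨hd', hm'⟩ := digits a' o' ho' hon'
  rw [h] at hd hm
  omega

/-- Column `c` of `B` holds the block `(c-1)n+1, …, cn`; row `r` sits at position
`offset n c r` in it. -/
def offset (n c r : ℕ) : ℕ := if (c % 2 = 1 ↔ c ≤ n / 2) then r else n + 1 - r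

def sourceCol (n r c : ℕ) : ℕ := if S n r then n + 1 - c else c

section Construction

variable {n r c : ℕ}

theorem S_iff : S n r ↔
    1 ≤ r ∧ r ≤ n ∧
      ((r % 2 = 0 ∧ r ≤ n / 2) ∨ (r % 2 = 1 ∧ n / 2 < r ∧ r ≤ n - 1)) := by
  simp only [S, Nat.even_iff, Nat.odd_iff]

theorem S_reflect (hn : 2 ∣ n) (hr : 1 ≤ r) (hrn : r ≤ n) : S n (n + 1 - r) ↔ S n r := by
  rw [S_iff, S_iff]; omega

theorem S_pair (hn : 4 ∣ n) {i : ℕ} (hi : 2 * i + 2 ≤ n) :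
    S n (2 * i + 2) ↔ ¬ S n (2 * i + 1) := by
  rw [S_iff, S_iff]; omega

theorem offset_mem_Icc (hr : 1 ≤ r) (hrn : r ≤ n) : offset n c r ∈ Set.Icc 1 n := by
  unfold offset; split_ifs <;> exact ⟨by omega, by omega⟩

theorem offset_inj {r' : ℕ} (hrn : r ≤ n) (hrn' : r' ≤ n) :
    offset n c r = offset n c r' ↔ r = r' := by
  unfold offset; split_ifs <;> omega

theorem offset_add_offset_reflect_row (hrn : r ≤ n) :
    offset n c r + offset n c (n + 1 - r) = n + 1 := by
  unfold offset; split_ifs <;> omega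

theorem offset_reflect_col (hn : 2 ∣ n) (hcn : c ≤ n) :
    offset n (n + 1 - c) r = offset n c r := by
  unfold offset; split_ifs <;> omega

theorem offset_add_offset_pair (hn : 4 ∣ n) (i : ℕ) (hrn : r ≤ n) :
    offset n (2 * i + 1) r + offset n (2 * i + 2) r = n + 1 := by
  unfold offset; split_ifs <;> omega

theorem sourceCol_mem_Icc (hc : 1 ≤ c) (hcn : c ≤ n) : sourceCol n r c ∈ Set.Icc 1 n := by
  unfold sourceCol; split_ifs <;> exact ⟨by omega, by omega⟩

theorem sourceCol_inj {c' : ℕ} (hcn : c ≤ n) (hcn' : c' ≤ n) :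
    sourceCol n r c = sourceCol n r c' ↔ c = c' := by
  unfold sourceCol; split_ifs <;> omega

theorem offset_sourceCol (hn : 2 ∣ n) (hcn : c ≤ n) (r' : ℕ) :
    offset n (sourceCol n r c) r' = offset n c r' := by
  unfold sourceCol; split_ifs
  · exact offset_reflect_col hn hcn
  · rfl

theorem sourceCol_add_sourceCol_reflect_col (hcn : c ≤ n) :
    sourceCol n r c + sourceCol n r (n + 1 - c) = n + 1 := by
  unfold sourceCol; split_ifs <;> omega

theorem sourceCol_add_sourceCol_reflect (hn : 2 ∣ n) (hr : 1 ≤ r) (hrn : r ≤ n)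
    (hcn : c ≤ n) :
    sourceCol n r c + sourceCol n (n + 1 - r) (n + 1 - c) = n + 1 := by
  simp only [sourceCol, S_reflect hn hr hrn]; split_ifs <;> omega

theorem sourceCol_add_sourceCol_pair (hn : 4 ∣ n) {i : ℕ} (hi : 2 * i + 2 ≤ n)
    (hcn : c ≤ n) :
    sourceCol n (2 * i + 1) c + sourceCol n (2 * i + 2) c = n + 1 := by
  simp only [sourceCol, S_pair hn hi]; split_ifs <;> omega

theorem B_eq (hn : 2 ∣ n) (hrn : r ≤ n) (hc : 1 ≤ c) (hcn : c ≤ n) :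
    B n r c = (c - 1) * n + offset n c r := by
  obtain ⟨j, rfl⟩ : ∃ j, c = j + 1 := ⟨c - 1, by omega⟩
  have hsq : 2 * (n ^ 2 / 2) = n * n := by
    rw [Nat.mul_div_cancel' (dvd_pow hn two_ne_zero), sq]
  have hjn : j * n + n ≤ n * n := by rw [← add_one_mul]; exact Nat.mul_le_mul_right n hcn
  have hrefl : (n + 1 - (j + 1)) * n = n * n - j * n := by
    rw [show n + 1 - (j + 1) = n - j by omega, Nat.sub_mul]
  have hrefl' : (n + 1 - (j + 1) - 1) * n = n * n - (j + 1) * n := by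
    rw [show n + 1 - (j + 1) - 1 = n - (j + 1) by omega, Nat.sub_mul]
  unfold B offset
  simp only [Nat.odd_iff, hsq, hrefl, hrefl', Nat.add_sub_cancel, add_one_mul]
  split_ifs <;> omega

theorem F_eq (hn : 2 ∣ n) (hrn : r ≤ n) (hc : 1 ≤ c) (hcn : c ≤ n) :
    F n r c = (sourceCol n r c - 1) * n + offset n c r := by
  obtain ⟨hk, hkn⟩ := sourceCol_mem_Icc (r := r) hc hcn
  rw [show F n r c = B n r (sourceCol n r c) from (apply_ite (B n r) _ _ _).symm,
    B_eq hn hrn hk hkn, offset_sourceCol hn hcn]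

theorem F_mem_Icc (hn : 2 ∣ n) (hr : 1 ≤ r) (hrn : r ≤ n) (hc : 1 ≤ c) (hcn : c ≤ n) :
    F n r c ∈ Set.Icc 1 (n ^ 2) := by
  obtain ⟨hk, hkn⟩ := sourceCol_mem_Icc (r := r) hc hcn
  obtain ⟨ho, hon⟩ := offset_mem_Icc (c := c) hr hrn
  have hblock : (sourceCol n r c - 1) * n ≤ (n - 1) * n := Nat.mul_le_mul_right n (by omega)
  have := sub_one_mul_self_add n
  rw [F_eq hn hrn hc hcn, Set.mem_Icc]
  omega

theorem F_injOn (hn : 2 ∣ n) :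
    Set.InjOn (fun rc : ℕ × ℕ => F n rc.1 rc.2) (Set.Icc 1 n ×ˢ Set.Icc 1 n) := by
  rintro ⟨r, c⟩ hrc ⟨r', c'⟩ hrc' h
  simp only [Set.mem_prod, Set.mem_Icc] at hrc hrc' h
  obtain ⟨⟨hr, hrn⟩, hc, hcn⟩ := hrc
  obtain ⟨⟨hr', hrn'⟩, hc', hcn'⟩ := hrc'
  obtain ⟨hk, hkn⟩ := sourceCol_mem_Icc (r := r) hc hcn
  obtain ⟨hk', hkn'⟩ := sourceCol_mem_Icc (r := r') hc' hcn'
  simp only [F_eq hn hrn hc hcn, F_eq hn hrn' hc' hcn'] at h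
  obtain ⟨hsrc, hoff⟩ := mul_add_inj_of_le (offset_mem_Icc hr hrn).1 (offset_mem_Icc hr hrn).2
    (offset_mem_Icc hr' hrn').1 (offset_mem_Icc hr' hrn').2 h
  replace hsrc : sourceCol n r c = sourceCol n r' c' := by omega
  rw [← offset_sourceCol (r := r) hn hcn, ← offset_sourceCol (r := r') hn hcn', ← hsrc,
    offset_inj hrn hrn'] at hoff
  subst hoff
  rw [sourceCol_inj hcn hcn'] at hsrc
  rw [hsrc]

theorem F_bijOn (hn : 2 ∣ n) :
    Set.BijOn (fun rc : ℕ × ℕ => F n rc.1 rc.2) (Set.Icc 1 n ×ˢ Set.Icc 1 n)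
      (Set.Icc 1 (n ^ 2)) := by
  have hmaps : Set.MapsTo (fun rc : ℕ × ℕ => F n rc.1 rc.2)
      (Set.Icc 1 n ×ˢ Set.Icc 1 n) (Set.Icc 1 (n ^ 2)) :=
    fun rc ⟨⟨hr, hrn⟩, hc, hcn⟩ => F_mem_Icc hn hr hrn hc hcn
  have hinj := F_injOn hn
  refine ⟨hmaps, hinj, ?_⟩
  have hsquare : Set.Icc 1 n ×ˢ Set.Icc 1 n = ↑(Icc 1 n ×ˢ Icc 1 n) := by simp
  rw [hsquare] at hmaps hinj ⊢
  rw [← coe_Icc] at hmaps ⊢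
  exact surjOn_of_injOn_of_card_le _ hmaps hinj (by simp [sq])

theorem F_add_F_reflect (hn : 2 ∣ n) (hr : 1 ≤ r) (hrn : r ≤ n) (hc : 1 ≤ c)
    (hcn : c ≤ n) :
    F n r c + F n (n + 1 - r) (n + 1 - c) = n ^ 2 + 1 := by
  obtain ⟨hk, -⟩ := sourceCol_mem_Icc (r := r) hc hcn
  obtain ⟨hk', -⟩ := sourceCol_mem_Icc (n := n) (r := n + 1 - r) (c := n + 1 - c)
    (by omega) (by omega)
  rw [F_eq hn hrn hc hcn, F_eq hn (by omega) (by omega) (by omega),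
    offset_reflect_col hn hcn]
  calc (sourceCol n r c - 1) * n + offset n c r
        + ((sourceCol n (n + 1 - r) (n + 1 - c) - 1) * n + offset n c (n + 1 - r))
      = ((sourceCol n r c - 1) * n + (sourceCol n (n + 1 - r) (n + 1 - c) - 1) * n)
        + (offset n c r + offset n c (n + 1 - r)) := by ring
    _ = (n - 1) * n + (n + 1) := by
      rw [sub_one_mul_add_sub_one_mul hk hk' (sourceCol_add_sourceCol_reflect hn hr hrn hcn),
        offset_add_offset_reflect_row hrn]
    _ = n ^ 2 + 1 := sub_one_mul_self_add n

theorem two_mul_sum_row (hn : 4 ∣ n) (hrn : r ≤ n) :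
    2 * ∑ c ∈ Icc 1 n, F n r c = n * (n ^ 2 + 1) := by
  have hn2 : 2 ∣ n := dvd_trans (by norm_num) hn
  have hblocks : 2 * ∑ c ∈ Icc 1 n, (sourceCol n r c - 1) * n = n * ((n - 1) * n) := by
    simpa using two_nsmul_sum_Icc_of_reflect (fun c => (sourceCol n r c - 1) * n)
      ((n - 1) * n) fun c hc => by
        rw [mem_Icc] at hc
        exact sub_one_mul_add_sub_one_mul (sourceCol_mem_Icc hc.1 hc.2).1
          (sourceCol_mem_Icc (by omega) (by omega)).1 (sourceCol_add_sourceCol_reflect_col hc.2)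
  have hoffsets : ∑ c ∈ Icc 1 n, offset n c r = n / 2 * (n + 1) := by
    simpa using sum_Icc_eq_nsmul_of_pairs hn2 (fun c => offset n c r) (n + 1)
      fun i _ => offset_add_offset_pair hn i hrn
  rw [sum_congr rfl fun c hc => F_eq hn2 hrn (mem_Icc.1 hc).1 (mem_Icc.1 hc).2,
    sum_add_distrib, mul_add, hblocks, hoffsets, ← mul_assoc 2, Nat.mul_div_cancel' hn2,
    ← mul_add, sub_one_mul_self_add]

theorem two_mul_sum_col (hn : 4 ∣ n) (hc : 1 ≤ c) (hcn : c ≤ n) :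
    2 * ∑ r ∈ Icc 1 n, F n r c = n * (n ^ 2 + 1) := by
  have hn2 : 2 ∣ n := dvd_trans (by norm_num) hn
  have hblocks : ∑ r ∈ Icc 1 n, (sourceCol n r c - 1) * n = n / 2 * ((n - 1) * n) := by
    simpa using sum_Icc_eq_nsmul_of_pairs hn2 (fun r => (sourceCol n r c - 1) * n)
      ((n - 1) * n) fun i hi => sub_one_mul_add_sub_one_mul (sourceCol_mem_Icc hc hcn).1
        (sourceCol_mem_Icc hc hcn).1 (sourceCol_add_sourceCol_pair hn hi hcn)
  have hoffsets : 2 * ∑ r ∈ Icc 1 n, offset n c r = n * (n + 1) := by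
    simpa using two_nsmul_sum_Icc_of_reflect (fun r => offset n c r) (n + 1)
      fun r hr => offset_add_offset_reflect_row (mem_Icc.1 hr).2
  rw [sum_congr rfl fun r hr => F_eq hn2 (mem_Icc.1 hr).2 hc hcn,
    sum_add_distrib, mul_add, hblocks, hoffsets, ← mul_assoc, Nat.mul_div_cancel' hn2,
    ← mul_add, sub_one_mul_self_add]

theorem two_mul_sum_diag (hn : 2 ∣ n) :
    2 * ∑ r ∈ Icc 1 n, F n r r = n * (n ^ 2 + 1) := by
  simpa using two_nsmul_sum_Icc_of_reflect (fun r => F n r r) (n ^ 2 + 1) fun r hr =>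
    F_add_F_reflect hn (mem_Icc.1 hr).1 (mem_Icc.1 hr).2 (mem_Icc.1 hr).1 (mem_Icc.1 hr).2

theorem two_mul_sum_antidiag (hn : 2 ∣ n) :
    2 * ∑ r ∈ Icc 1 n, F n r (n + 1 - r) = n * (n ^ 2 + 1) := by
  have hpairs : ∀ r ∈ Icc 1 n,
      F n r (n + 1 - r) + F n (n + 1 - r) (n + 1 - (n + 1 - r)) = n ^ 2 + 1 := by
    intro r hr
    rw [mem_Icc] at hr
    exact F_add_F_reflect hn hr.1 hr.2 (by omega) (by omega)
  simpa using two_nsmul_sum_Icc_of_reflect (fun r => F n r (n + 1 - r)) (n ^ 2 + 1) hpairs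

end Construction

theorem doubly_even_is_associated_magic_square_general (n : ℕ) (h4 : n % 4 = 0) :
    Set.BijOn (fun rc : ℕ × ℕ => F n rc.1 rc.2)
      (Set.Icc 1 n ×ˢ Set.Icc 1 n) (Set.Icc 1 (n ^ 2)) ∧
    (∀ r ∈ Finset.Icc 1 n, ∑ c ∈ Finset.Icc 1 n, F n r c = n * (n ^ 2 + 1) / 2) ∧
    (∀ c ∈ Finset.Icc 1 n, ∑ r ∈ Finset.Icc 1 n, F n r c = n * (n ^ 2 + 1) / 2) ∧
    (∑ r ∈ Finset.Icc 1 n, F n r r = n * (n ^ 2 + 1) / 2) ∧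
    (∑ r ∈ Finset.Icc 1 n, F n r (n + 1 - r) = n * (n ^ 2 + 1) / 2) ∧
    (∀ r ∈ Set.Icc 1 n, ∀ c ∈ Set.Icc 1 n,
      F n r c + F n (n + 1 - r) (n + 1 - c) = n ^ 2 + 1) := by
  have hn4 : 4 ∣ n := Nat.dvd_of_mod_eq_zero h4
  have hn2 : 2 ∣ n := dvd_trans (by norm_num) hn4
  refine ⟨F_bijOn hn2, fun r hr => ?_, fun c hc => ?_, ?_, ?_,
    fun r hr c hc => F_add_F_reflect hn2 hr.1 hr.2 hc.1 hc.2⟩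
  · have := two_mul_sum_row hn4 (mem_Icc.1 hr).2; omega
  · have := two_mul_sum_col hn4 (mem_Icc.1 hc).1 (mem_Icc.1 hc).2; omega
  · have := two_mul_sum_diag hn2; omega
  · have := two_mul_sum_antidiag hn2; omega

/-- `F` is an associated magic square of order `n`: its values on `{1,…,n}²` are exactly
`1,…,n²` each once; every row, column and both main diagonals sum to `n(n²+1)/2`;
and `F r c + F (n+1-r) (n+1-c) = n² + 1` for all `r, c ∈ {1,…,n}`. -/
theorem doubly_even_is_associated_magic_square (n : ℕ) (h4 : n % 4 = 0) (hn : 4 ≤ n) :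
    Set.BijOn (fun rc : ℕ × ℕ => F n rc.1 rc.2)
      (Set.Icc 1 n ×ˢ Set.Icc 1 n) (Set.Icc 1 (n ^ 2)) ∧
    (∀ r ∈ Finset.Icc 1 n, ∑ c ∈ Finset.Icc 1 n, F n r c = n * (n ^ 2 + 1) / 2) ∧
    (∀ c ∈ Finset.Icc 1 n, ∑ r ∈ Finset.Icc 1 n, F n r c = n * (n ^ 2 + 1) / 2) ∧
    (∑ r ∈ Finset.Icc 1 n, F n r r = n * (n ^ 2 + 1) / 2) ∧
    (∑ r ∈ Finset.Icc 1 n, F n r (n + 1 - r) = n * (n ^ 2 + 1) / 2) ∧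
    (∀ r ∈ Set.Icc 1 n, ∀ c ∈ Set.Icc 1 n,
      F n r c + F n (n + 1 - r) (n + 1 - c) = n ^ 2 + 1) :=
  doubly_even_is_associated_magic_square_general n h4
end

section
/- The map (r,c) ↦ F(r,c) is a bijection from {1,…,n} × {1,…,n} onto {1,2,…,n²}. -/
/-!
For even `n` we have `2p = n²`, and column `c` of `B` then lists the block
`(c - 1) n + 1, …, c n` top to bottom, in increasing or decreasing order. So `B` is the
enumeration `(c, s) ↦ (c - 1) n + s` of `{1, …, n²}` precomposed with a reflection
`s ↦ n + 1 - s` in some columns, and `F` additionally reflects `c ↦ n + 1 - c` in the rows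
of `S`. Reflections permute `{1, …, n}`, hence `F` is a composite of bijections; the
particular choice of `S` and of the column orders plays no role.
-/

open Set

def reflectIf (n : ℕ) (p : Prop) [Decidable p] (x : ℕ) : ℕ := if p then n + 1 - x else x

lemma bijOn_reflectIf (n : ℕ) (p : Prop) [Decidable p] :
    BijOn (reflectIf n p) (Icc 1 n) (Icc 1 n) := by
  have hmaps : MapsTo (reflectIf n p) (Icc 1 n) (Icc 1 n) := fun x hx => by
    simp only [mem_Icc, reflectIf] at hx ⊢; split <;> omega
  refine InvOn.bijOn ⟨fun x hx => ?_, fun x hx => ?_⟩ hmaps hmaps <;>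
    simp only [mem_Icc, reflectIf] at hx ⊢ <;> split <;> omega

lemma bijOn_fiberwise {α β : Type*} {s : Set α} {t : Set β} {f : α → β → β}
    (hf : ∀ a ∈ s, BijOn (f a) t t) :
    BijOn (fun p : α × β => (p.1, f p.1 p.2)) (s ×ˢ t) (s ×ˢ t) := by
  refine ⟨fun p hp => ⟨hp.1, (hf p.1 hp.1).mapsTo hp.2⟩, ?_, ?_⟩
  · rintro ⟨a, b⟩ ⟨ha, hb⟩ ⟨a', b'⟩ ⟨-, hb'⟩ h
    obtain ⟨rfl, h⟩ := Prod.mk.inj h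
    exact Prod.ext rfl ((hf a ha).injOn hb hb' h)
  · rintro ⟨a, c⟩ ⟨ha, hc⟩
    obtain ⟨b, hb, rfl⟩ := (hf a ha).surjOn hc
    exact ⟨(a, b), ⟨ha, hb⟩, rfl⟩

lemma bijOn_swap_prod {α β : Type*} (s : Set α) (t : Set β) :
    BijOn Prod.swap (s ×ˢ t) (t ×ˢ s) :=
  (Equiv.prodComm α β).bijOn fun _ => and_comm

lemma bijOn_sub_one_mul_add (m n : ℕ) :
    BijOn (fun p : ℕ × ℕ => (p.1 - 1) * n + p.2) (Icc 1 m ×ˢ Icc 1 n) (Icc 1 (m * n)) := by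
  have hdivmod : ∀ a s, s ∈ Icc 1 n → ((a - 1) * n + s - 1) / n = a - 1 ∧
      ((a - 1) * n + s - 1) % n = s - 1 := fun a s ⟨hs1, hsn⟩ => by
    rw [show (a - 1) * n + s - 1 = s - 1 + n * (a - 1) by rw [mul_comm]; omega]
    constructor
    · rw [Nat.add_mul_div_left _ _ (by omega), Nat.div_eq_of_lt (by omega), zero_add]
    · rw [Nat.add_mul_mod_self_left, Nat.mod_eq_of_lt (by omega)]
  refine ⟨?_, ?_, ?_⟩
  · rintro ⟨a, s⟩ ⟨⟨ha1, ham⟩, ⟨hs1, hsn⟩⟩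
    have : (a - 1) * n + n ≤ m * n := by
      rw [← Nat.succ_mul]; exact Nat.mul_le_mul_right n (by omega)
    constructor <;> simp only <;> omega
  · rintro ⟨a, s⟩ ⟨⟨ha1, -⟩, hs⟩ ⟨a', s'⟩ ⟨⟨ha1', -⟩, hs'⟩ h
    have h₁ := hdivmod a s hs
    have h₂ := hdivmod a' s' hs'
    simp only at h
    rw [h] at h₁
    simp only [mem_Icc, Prod.mk.injEq] at hs hs' ⊢
    omega
  · rintro v ⟨hv1, hvmn⟩
    have hn : 0 < n := Nat.pos_of_ne_zero (by rintro rfl; simp at hvmn; omega)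
    refine ⟨((v - 1) / n + 1, (v - 1) % n + 1),
      ⟨⟨Nat.le_add_left 1 _, ?_⟩, ⟨Nat.le_add_left 1 _, ?_⟩⟩, ?_⟩
    · have : (v - 1) / n < m := (Nat.div_lt_iff_lt_mul hn).2 (by omega)
      omega
    · have := Nat.mod_lt (v - 1) hn
      omega
    · have := Nat.div_add_mod' (v - 1) n
      simp only [Nat.add_sub_cancel]
      omega

def IsAscendingColumn (n c : ℕ) : Prop := if c ≤ n / 2 then Odd c else Odd (n + 1 - c)

instance (n c : ℕ) : Decidable (IsAscendingColumn n c) := by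
  unfold IsAscendingColumn; infer_instance

lemma B_eq_of_even {n r c : ℕ} (hn : Even n) (hr : r ≤ n) (hc : c ∈ Icc 1 n) :
    B n r c = (c - 1) * n + reflectIf n (¬IsAscendingColumn n c) r := by
  obtain ⟨hc1, hcn⟩ := hc
  have hsq : 2 * (n ^ 2 / 2) = n ^ 2 :=
    Nat.two_mul_div_two_of_even (hn.pow_of_ne_zero two_ne_zero)
  have hcn_mul : c * n = (c - 1) * n + n := by rw [← Nat.succ_mul]; congr 1; omega
  have hk : (n + 1 - c) * n = (n + 1 - c - 1) * n + n := by rw [← Nat.succ_mul]; congr 1; omega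
  have hn2 : n ^ 2 = (c - 1) * n + (n + 1 - c) * n := by rw [← add_mul, sq]; congr 1; omega
  unfold B reflectIf IsAscendingColumn
  split_ifs <;> omega

lemma F_eq_B_reflectIf (n r c : ℕ) : F n r c = B n r (reflectIf n (S n r) c) :=
  (apply_ite (B n r) _ _ _).symm

theorem doubly_even_bijective_general (n : ℕ) (h4 : n % 4 = 0) :
    Set.BijOn (fun rc : ℕ × ℕ => F n rc.1 rc.2)
      (Set.Icc 1 n ×ˢ Set.Icc 1 n) (Set.Icc 1 (n ^ 2)) := by
  have hn : Even n := Nat.even_iff.2 (by omega)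
  have hrows := bijOn_fiberwise fun r (_ : r ∈ Icc 1 n) => bijOn_reflectIf n (S n r)
  have hcols := bijOn_fiberwise fun c (_ : c ∈ Icc 1 n) =>
    bijOn_reflectIf n (¬IsAscendingColumn n c)
  rw [sq]
  refine ((bijOn_sub_one_mul_add n n).comp
    (hcols.comp ((bijOn_swap_prod _ _).comp hrows))).congr ?_
  rintro ⟨r, c⟩ ⟨hr, hc⟩
  simp only [Function.comp_apply, Prod.swap_prod_mk, F_eq_B_reflectIf]
  exact (B_eq_of_even hn hr.2 ((bijOn_reflectIf n _).mapsTo hc)).symm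

/-- The map `(r,c) ↦ F r c` is a bijection from `{1,…,n} × {1,…,n}` onto `{1,…,n²}`. -/
theorem doubly_even_bijective (n : ℕ) (h4 : n % 4 = 0) (hn : 4 ≤ n) :
    Set.BijOn (fun rc : ℕ × ℕ => F n rc.1 rc.2)
      (Set.Icc 1 n ×ˢ Set.Icc 1 n) (Set.Icc 1 (n ^ 2)) :=
  doubly_even_bijective_general n h4
end

section
/- For every column index c ∈ {1,…,n}, the column sum ∑_{r=1}^{n} F(r,c) equals n(n²+1)/2. -/
/-!
Write `c' = n + 1 - c`. In every row the difference `B r c' - B r c = (n + 1 - 2c) n` does not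
depend on `r`, and `S` contains exactly one row of each pair `2j - 1, 2j` (as `n / 2` is even),
so half of all rows. Hence column `c` of `F`, which reads `B r c'` on `S` and `B r c` elsewhere,
sums to the mean of the column sums of `B` at `c` and `c'`. These two columns add up to
`n (n² + 1)` since `B` is complementary: `B r c + B (n + 1 - r) (n + 1 - c) = n² + 1`.
-/

open Finset

theorem Finset.two_nsmul_sum_ite_of_add_eq_add {ι M : Type*} [AddCancelCommMonoid M]
    {s : Finset ι} {p : ι → Prop} [DecidablePred p] {f g : ι → M} {a b : M}
    (hp : 2 * #(s.filter p) = #s) (hfg : ∀ i ∈ s, g i + a = f i + b) :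
    2 • ∑ i ∈ s, (if p i then g i else f i) = ∑ i ∈ s, f i + ∑ i ∈ s, g i := by
  rw [sum_ite, ← sum_filter_add_sum_filter_not s p f, ← sum_filter_add_sum_filter_not s p g]
  have hs := card_filter_add_card_filter_not (s := s) p
  set P := s.filter p
  set Q := s.filter (fun i => ¬p i)
  have hPQ : #P = #Q := by omega
  have hP : ∑ i ∈ P, g i + #P • a = ∑ i ∈ P, f i + #P • b := by
    simp only [← sum_const, ← sum_add_distrib]
    exact sum_congr rfl fun i hi => hfg i (mem_filter.1 hi).1
  have hQ : ∑ i ∈ Q, g i + #P • a = ∑ i ∈ Q, f i + #P • b := by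
    simp only [hPQ, ← sum_const, ← sum_add_distrib]
    exact sum_congr rfl fun i hi => hfg i (mem_filter.1 hi).1
  apply add_right_cancel (b := #P • a + #P • b)
  calc 2 • (∑ i ∈ P, g i + ∑ i ∈ Q, f i) + (#P • a + #P • b)
      = (∑ i ∈ P, g i + #P • a) + (∑ i ∈ Q, f i + #P • b) + (∑ i ∈ P, g i + ∑ i ∈ Q, f i) := by
        abel
    _ = (∑ i ∈ P, f i + #P • b) + (∑ i ∈ Q, g i + #P • a) + (∑ i ∈ P, g i + ∑ i ∈ Q, f i) := by
        rw [hP, ← hQ]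
    _ = ∑ i ∈ P, f i + ∑ i ∈ Q, f i + (∑ i ∈ P, g i + ∑ i ∈ Q, g i) + (#P • a + #P • b) := by
        abel

theorem Finset.card_filter_Icc_of_pairs {p : ℕ → Prop} [DecidablePred p] {k : ℕ}
    (h : ∀ j < k, (p (2 * j + 1) ↔ ¬p (2 * j + 2))) :
    #((Icc 1 (2 * k)).filter p) = k := by
  induction k with
  | zero => simp
  | succ k ih =>
    rw [card_filter, show 2 * (k + 1) = 2 * k + 1 + 1 by ring, sum_Icc_succ_top (by omega),
      sum_Icc_succ_top (by omega), ← card_filter, ih fun j hj => h j (by omega)]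
    have hk := h k (by omega)
    by_cases hk1 : p (2 * k + 1)
    · simp [hk1, hk.1 hk1]
    · simp [hk1, not_not.1 (mt hk.2 hk1)]

theorem Finset.sum_Icc_one_reflect {M : Type*} [AddCommMonoid M] (f : ℕ → M) (n : ℕ) :
    ∑ r ∈ Icc 1 n, f (n + 1 - r) = ∑ r ∈ Icc 1 n, f r := by
  refine sum_nbij' (fun r => n + 1 - r) (fun r => n + 1 - r) ?_ ?_ ?_ ?_ fun _ _ => rfl <;>
    · intro r hr
      simp only [mem_Icc] at hr ⊢
      omega

theorem two_mul_card_filter_S {n : ℕ} (h4 : n % 4 = 0) : 2 * #((Icc 1 n).filter (S n)) = n := by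
  obtain ⟨k, rfl⟩ : ∃ k, n = 2 * k := ⟨n / 2, by omega⟩
  rw [card_filter_Icc_of_pairs]
  intro j hj
  simp only [S, Nat.even_iff, Nat.odd_iff]
  omega

theorem two_mul_sq_div_two {n : ℕ} (hn : Even n) : 2 * (n ^ 2 / 2) = n * n := by
  rw [sq]
  exact Nat.two_mul_div_two_of_even (hn.mul_right n)

theorem B_add_B_rev {n r c : ℕ} (hn : Even n) (hr : r ∈ Icc 1 n) (hc : c ∈ Icc 1 n) :
    B n r c + B n (n + 1 - r) (n + 1 - c) = n ^ 2 + 1 := by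
  rw [mem_Icc] at hr hc
  have hsq := two_mul_sq_div_two hn
  have hcn : n ≤ c * n ∧ c * n ≤ n * n :=
    ⟨Nat.le_mul_of_pos_left n hc.1, Nat.mul_le_mul_right n hc.2⟩
  have hn_mod := Nat.even_iff.mp hn
  unfold B
  -- once the products are distributed, every case is linear in the atoms `n * n` and `c * n`
  split_ifs <;> simp only [Nat.odd_iff, Nat.sub_mul, Nat.add_mul, one_mul, sq] at * <;>
    generalize n * n = N at * <;> generalize c * n = C at * <;> omega

theorem B_rev_add {n r c : ℕ} (hn : Even n) (hr : r ∈ Icc 1 n) (hc : c ∈ Icc 1 n) :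
    B n r (n + 1 - c) + 2 * (c * n) = B n r c + (n + 1) * n := by
  rw [mem_Icc] at hr hc
  have hsq := two_mul_sq_div_two hn
  have hcn : n ≤ c * n ∧ c * n ≤ n * n :=
    ⟨Nat.le_mul_of_pos_left n hc.1, Nat.mul_le_mul_right n hc.2⟩
  have hn_mod := Nat.even_iff.mp hn
  unfold B
  split_ifs <;> simp only [Nat.odd_iff, Nat.sub_mul, Nat.add_mul, one_mul, sq] at * <;>
    generalize n * n = N at * <;> generalize c * n = C at * <;> omega

theorem sum_B_add_sum_B_rev {n c : ℕ} (hn : Even n) (hc : c ∈ Icc 1 n) :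
    ∑ r ∈ Icc 1 n, B n r c + ∑ r ∈ Icc 1 n, B n r (n + 1 - c) = n * (n ^ 2 + 1) := by
  rw [← sum_Icc_one_reflect (fun r => B n r (n + 1 - c)), ← sum_add_distrib,
    sum_congr rfl fun r hr => B_add_B_rev hn hr hc, sum_const, Nat.card_Icc, smul_eq_mul,
    Nat.add_sub_cancel]

theorem doubly_even_column_sums_general (n : ℕ) (h4 : n % 4 = 0) :
    ∀ c ∈ Finset.Icc 1 n, ∑ r ∈ Finset.Icc 1 n, F n r c = n * (n ^ 2 + 1) / 2 := by
  intro c hc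
  have hn : Even n := Nat.even_iff.2 (by omega)
  have hF : 2 * ∑ r ∈ Icc 1 n, F n r c = n * (n ^ 2 + 1) := by
    rw [← sum_B_add_sum_B_rev hn hc, ← smul_eq_mul]
    refine two_nsmul_sum_ite_of_add_eq_add ?_ fun r hr => B_rev_add hn hr hc
    rw [two_mul_card_filter_S h4, Nat.card_Icc, Nat.add_sub_cancel]
  omega

/-- Every column of `F` sums to `n(n²+1)/2`. -/
theorem doubly_even_column_sums (n : ℕ) (h4 : n % 4 = 0) (hn : 4 ≤ n) :
    ∀ c ∈ Finset.Icc 1 n, ∑ r ∈ Finset.Icc 1 n, F n r c = n * (n ^ 2 + 1) / 2 :=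
  doubly_even_column_sums_general n h4
end

section
/- The array F is associated: for all r, c ∈ {1,…,n}, F(r,c) + F(n+1−r, n+1−c) = n² + 1. -/
section

variable {n : ℕ}

lemma B_add_B_compl_of_le_half (hn : Even n) {r c : ℕ} (hr : r ∈ Set.Icc 1 n)
    (hc₁ : 1 ≤ c) (hc₂ : c ≤ n / 2) :
    B n r c + B n (n + 1 - r) (n + 1 - c) = n ^ 2 + 1 := by
  obtain ⟨hr₁, hr₂⟩ := hr
  have hp : 2 * (n ^ 2 / 2) = n ^ 2 :=
    Nat.two_mul_div_two_of_even (Nat.even_pow.mpr ⟨hn, two_ne_zero⟩)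
  have hn₂ := Nat.two_mul_div_two_of_even hn
  have hcn₁ : n ≤ c * n := Nat.le_mul_of_pos_left n hc₁
  have hcn₂ : c * n ≤ n ^ 2 := by rw [sq]; exact Nat.mul_le_mul_right n (by omega)
  have hpred : (c - 1) * n = c * n - n := by rw [Nat.sub_mul, one_mul]
  have hc' : ¬ n + 1 - c ≤ n / 2 := by omega
  unfold B
  rw [if_pos hc₂, if_neg hc', Nat.sub_sub_self (by omega : c ≤ n + 1), hp, hpred]
  generalize c * n = A at *
  generalize n ^ 2 = N at *
  rcases Nat.even_or_odd c with hc | hc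
  · simp only [if_neg (Nat.not_odd_iff_even.mpr hc)]
    omega
  · simp only [if_pos hc]
    omega

lemma B_add_B_compl (hn : Even n) {r c : ℕ} (hr : r ∈ Set.Icc 1 n) (hc : c ∈ Set.Icc 1 n) :
    B n r c + B n (n + 1 - r) (n + 1 - c) = n ^ 2 + 1 := by
  obtain ⟨hr₁, hr₂⟩ := hr
  obtain ⟨hc₁, hc₂⟩ := hc
  have hn₂ := Nat.two_mul_div_two_of_even hn
  rcases le_or_gt c (n / 2) with hc | hc
  · exact B_add_B_compl_of_le_half hn ⟨hr₁, hr₂⟩ hc₁ hc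
  · have hsym := B_add_B_compl_of_le_half hn (r := n + 1 - r) (c := n + 1 - c)
      ⟨by omega, by omega⟩ (by omega) (by omega : n + 1 - c ≤ n / 2)
    rwa [Nat.sub_sub_self (by omega : r ≤ n + 1), Nat.sub_sub_self (by omega : c ≤ n + 1),
      add_comm] at hsym

lemma S_compl_iff (hn : Even n) {r : ℕ} (hr : r ∈ Set.Icc 1 n) :
    S n (n + 1 - r) ↔ S n r := by
  obtain ⟨hr₁, hr₂⟩ := hr
  obtain ⟨k, rfl⟩ := hn
  unfold S
  simp only [Nat.even_iff, Nat.odd_iff]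
  omega

end

theorem doubly_even_associated_general (n : ℕ) (h4 : n % 4 = 0) :
    ∀ r ∈ Set.Icc 1 n, ∀ c ∈ Set.Icc 1 n,
      F n r c + F n (n + 1 - r) (n + 1 - c) = n ^ 2 + 1 := by
  have hn : Even n := Nat.even_iff.mpr (by omega)
  intro r hr c hc
  have hc' : n + 1 - c ∈ Set.Icc 1 n := by
    obtain ⟨hc₁, hc₂⟩ := hc
    exact ⟨by omega, by omega⟩
  unfold F
  simp only [S_compl_iff hn hr]
  split_ifs
  · exact B_add_B_compl hn hr hc'
  · exact B_add_B_compl hn hr hc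

/-- `F` is associated: `F r c + F (n+1-r) (n+1-c) = n² + 1` for all `r, c ∈ {1,…,n}`. -/
theorem doubly_even_associated (n : ℕ) (h4 : n % 4 = 0) (hn : 4 ≤ n) :
    ∀ r ∈ Set.Icc 1 n, ∀ c ∈ Set.Icc 1 n,
      F n r c + F n (n + 1 - r) (n + 1 - c) = n ^ 2 + 1 :=
  doubly_even_associated_general n h4
end

section
/- Let n ∈ ℕ with n ≡ 0 (mod 4), p = n²/2, m = n/2, and let r ∈ ℕ with 1 ≤ r ≤ n. Then ∑_{k odd, 1 ≤ k ≤ m} [((k−1)n + r) + (2p − kn + r)] + ∑_{k even, 1 ≤ k ≤ m} [(kn − (r−1)) + (2p − (k−1)n − (r−1))] = m(2p + 1), which equals n(n²+1)/2. -/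
/-! Every odd-indexed summand equals `2p - n + 2r` and every even-indexed one `2p + n + 2 - 2r`,
so a pair of them contributes `2(2p + 1)`. As `4 ∣ n`, the range `1, …, n/2` holds equally many
odd and even `k`, namely `n/4`, which gives `(n/2)(2p + 1)`. -/

namespace Nat

lemma card_filter_odd_Icc_one_two_mul (t : ℕ) :
    ((Finset.Icc 1 (2 * t)).filter Odd).card = t := by
  have himage : (Finset.Icc 1 (2 * t)).filter Odd = (Finset.range t).image (2 * · + 1) := by
    ext k
    simp only [Finset.mem_filter, Finset.mem_Icc, Finset.mem_image, Finset.mem_range, odd_iff]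
    constructor
    · rintro ⟨⟨hk1, hk2⟩, hk⟩
      exact ⟨k / 2, by omega, by omega⟩
    · rintro ⟨i, hi, rfl⟩
      omega
  rw [himage, Finset.card_image_of_injective _ fun a b h => by simpa using h, Finset.card_range]

lemma card_filter_even_Icc_one_two_mul (t : ℕ) :
    ((Finset.Icc 1 (2 * t)).filter Even).card = t := by
  have himage : (Finset.Icc 1 (2 * t)).filter Even = (Finset.range t).image (2 * · + 2) := by
    ext k
    simp only [Finset.mem_filter, Finset.mem_Icc, Finset.mem_image, Finset.mem_range, even_iff]
    constructor
    · rintro ⟨⟨hk1, hk2⟩, hk⟩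
      exact ⟨k / 2 - 1, by omega, by omega⟩
    · rintro ⟨i, hi, rfl⟩
      omega
  rw [himage, Finset.card_image_of_injective _ fun a b h => by simpa using h, Finset.card_range]

lemma sub_one_mul_add_add_sub_mul_add {n r c k : ℕ} (hk : 1 ≤ k) (hkc : k * n ≤ c) :
    (k - 1) * n + r + (c - k * n + r) = c + 2 * r - n := by
  obtain ⟨j, rfl⟩ := Nat.exists_eq_add_of_le' hk
  simp only [add_tsub_cancel_right, add_mul, one_mul] at *
  omega

lemma mul_sub_add_sub_sub_one_mul_sub {n r c k : ℕ} (hr1 : 1 ≤ r) (hrn : r ≤ n) (hk : 1 ≤ k)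
    (hkc : k * n ≤ c) :
    k * n - (r - 1) + (c - (k - 1) * n - (r - 1)) = c + n + 2 - 2 * r := by
  obtain ⟨j, rfl⟩ := Nat.exists_eq_add_of_le' hk
  simp only [add_tsub_cancel_right, add_mul, one_mul] at *
  omega

lemma div_two_mul_two_mul_sq_div_two_add_one {n : ℕ} (hn : Even n) :
    n / 2 * (2 * (n ^ 2 / 2) + 1) = n * (n ^ 2 + 1) / 2 := by
  obtain ⟨m, rfl⟩ := hn
  have hsq : (m + m) ^ 2 = 2 * (2 * m ^ 2) := by ring
  rw [hsq, mul_div_cancel_left₀ _ two_ne_zero, ← two_mul, mul_div_cancel_left₀ _ two_ne_zero,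
    ← hsq, mul_assoc, mul_div_cancel_left₀ _ two_ne_zero]

end Nat

/-- Row-sum identity for the intermediate square of the doubly-even construction:
with `p = n²/2` and `m = n/2`, for any row `r` with `1 ≤ r ≤ n`,
`∑_{k odd, 1 ≤ k ≤ m} [((k-1)n + r) + (2p - kn + r)]
 + ∑_{k even, 1 ≤ k ≤ m} [(kn - (r-1)) + (2p - (k-1)n - (r-1))] = m(2p + 1) = n(n²+1)/2`. -/
theorem row_sum_identity (n r : ℕ) (h4 : n % 4 = 0) (hr1 : 1 ≤ r) (hrn : r ≤ n) :
    (∑ k ∈ (Finset.Icc 1 (n / 2)).filter (fun k => Odd k),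
        (((k - 1) * n + r) + (2 * (n ^ 2 / 2) - k * n + r))) +
    (∑ k ∈ (Finset.Icc 1 (n / 2)).filter (fun k => Even k),
        ((k * n - (r - 1)) + (2 * (n ^ 2 / 2) - (k - 1) * n - (r - 1))))
      = (n / 2) * (2 * (n ^ 2 / 2) + 1) ∧
    (n / 2) * (2 * (n ^ 2 / 2) + 1) = n * (n ^ 2 + 1) / 2 := by
  obtain ⟨t, rfl⟩ : ∃ t, n = 4 * t := ⟨n / 4, by omega⟩
  refine ⟨?_, Nat.div_two_mul_two_mul_sq_div_two_add_one ⟨2 * t, by ring⟩⟩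
  have hm : 4 * t / 2 = 2 * t := by omega
  set c := 2 * ((4 * t) ^ 2 / 2) with hc
  have hbound : ∀ k ≤ 2 * t, k * (4 * t) ≤ c := by
    intro k hk
    have hsq : (4 * t) ^ 2 = 2 * (8 * t ^ 2) := by ring
    rw [hc, hsq, Nat.mul_div_cancel_left _ two_pos]
    nlinarith
  have hn_le : 4 * t ≤ c := by simpa using hbound 1 (by omega)
  rw [hm, Finset.sum_congr rfl fun k hk =>
      have hk := Finset.mem_Icc.1 (Finset.mem_filter.1 hk).1
      Nat.sub_one_mul_add_add_sub_mul_add hk.1 (hbound k hk.2),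
    Finset.sum_congr rfl fun k hk =>
      have hk := Finset.mem_Icc.1 (Finset.mem_filter.1 hk).1
      Nat.mul_sub_add_sub_sub_one_mul_sub hr1 hrn hk.1 (hbound k hk.2),
    Finset.sum_const, Finset.sum_const, Nat.card_filter_odd_Icc_one_two_mul,
    Nat.card_filter_even_Icc_one_two_mul, smul_eq_mul, smul_eq_mul, ← mul_add,
    show c + 2 * r - 4 * t + (c + 4 * t + 2 - 2 * r) = 2 * (c + 1) by omega]
  ring
end

section
/- Let n ∈ ℕ with n ≡ 0 (mod 4), p = n²/2, m = n/2, and let k ∈ ℕ with 1 ≤ k ≤ m. Then ∑_{i=1}^{n/4} [(k−1)n + (2i−1)] + ∑_{i=1}^{n/4} [2p − kn + 2i] + ∑_{i=1}^{n/4} [2p − (k−1)n − (2i−1)] + ∑_{i=1}^{n/4} [kn − (2i−2)] = m(2p + 1), which equals n(n²+1)/2. -/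
/-! For a fixed `i` the four entries form two complementary pairs: the first and third sum to
`2p`, the second and fourth to `2p + 2`. So each of the `n/4` indices contributes `2(2p + 1)`. -/

open Finset

lemma column_entries_sum_eq {q k n i : ℕ} (hk : 1 ≤ k) (hq : k * n ≤ q) (hi : 1 ≤ i)
    (hin : 2 * i ≤ n) :
    (k - 1) * n + (2 * i - 1) + (q - k * n + 2 * i) + (q - (k - 1) * n - (2 * i - 1)) +
      (k * n - (2 * i - 2)) = 2 * q + 2 := by
  obtain ⟨j, rfl⟩ : ∃ j, k = j + 1 := ⟨k - 1, by omega⟩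
  have hsplit : (j + 1) * n = j * n + n := by ring
  rw [hsplit] at hq
  rw [Nat.add_sub_cancel, hsplit]
  omega

/-- Column-sum identity after the row swaps in the doubly-even construction:
with `p = n²/2` and `m = n/2`, for any column `k` with `1 ≤ k ≤ m`,
`∑_{i=1}^{n/4} [(k-1)n + (2i-1)] + ∑_{i=1}^{n/4} [2p - kn + 2i]
 + ∑_{i=1}^{n/4} [2p - (k-1)n - (2i-1)] + ∑_{i=1}^{n/4} [kn - (2i-2)]
 = m(2p + 1) = n(n²+1)/2`. -/
theorem column_sum_identity (n k : ℕ) (h4 : n % 4 = 0) (hk1 : 1 ≤ k) (hkm : k ≤ n / 2) :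
    (∑ i ∈ Finset.Icc 1 (n / 4), ((k - 1) * n + (2 * i - 1))) +
    (∑ i ∈ Finset.Icc 1 (n / 4), (2 * (n ^ 2 / 2) - k * n + 2 * i)) +
    (∑ i ∈ Finset.Icc 1 (n / 4), (2 * (n ^ 2 / 2) - (k - 1) * n - (2 * i - 1))) +
    (∑ i ∈ Finset.Icc 1 (n / 4), (k * n - (2 * i - 2)))
      = (n / 2) * (2 * (n ^ 2 / 2) + 1) ∧
    (n / 2) * (2 * (n ^ 2 / 2) + 1) = n * (n ^ 2 + 1) / 2 := by
  have h2 : 2 ∣ n := by omega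
  have hsq : 2 * (n ^ 2 / 2) = n ^ 2 := Nat.mul_div_cancel' (h2.pow two_ne_zero)
  have hq : k * n ≤ 2 * (n ^ 2 / 2) := by
    rw [hsq, sq]
    exact Nat.mul_le_mul_right n (by omega)
  have hentries : ∀ i ∈ Icc 1 (n / 4),
      (k - 1) * n + (2 * i - 1) + (2 * (n ^ 2 / 2) - k * n + 2 * i) +
        (2 * (n ^ 2 / 2) - (k - 1) * n - (2 * i - 1)) + (k * n - (2 * i - 2))
        = 2 * (2 * (n ^ 2 / 2) + 1) := fun i hi => by
    have hi := mem_Icc.1 hi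
    rw [column_entries_sum_eq hk1 hq hi.1 (by omega)]
    ring
  simp_rw [← sum_add_distrib]
  rw [sum_congr rfl hentries, sum_const, Nat.card_Icc, smul_eq_mul, ← mul_assoc]
  constructor
  · congr 1
    omega
  · rw [hsq]
    exact Nat.div_mul_right_comm h2 _
end

section
/- For every column index c ∈ {1,…,n}, the column sum of the inner array satisfies ∑_{r=1}^{n−2} G(r,c) = (n/2 − 1)(n² + 1). -/
/-- Base array of the singly-even construction on rows `1 ≤ r ≤ n-2`, columns `1 ≤ c ≤ n`:
for `1 ≤ k ≤ n/2 - 1`, if `k` is odd then `B' r k = (k-1)(n-2) + r` and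
`B' r (n+1-k) = 2p - k(n-2) + r`; if `k` is even then `B' r k = k(n-2) + 1 - r` and
`B' r (n+1-k) = 2p - (k-1)(n-2) + 1 - r`; and for `k = m = n/2`,
`B' r m = (m-1)(n-2) + r` and `B' r (m+1) = 2p - (m-1)(n-2) + 1 - r`, where `p = n²/2`. -/
def B' (n r c : ℕ) : ℕ :=
  if c ≤ n / 2 - 1 then
    if Odd c then (c - 1) * (n - 2) + r else c * (n - 2) + 1 - r
  else if c = n / 2 then (n / 2 - 1) * (n - 2) + r
  else if c = n / 2 + 1 then 2 * (n ^ 2 / 2) - (n / 2 - 1) * (n - 2) + 1 - r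
  else
    if Odd (n + 1 - c) then 2 * (n ^ 2 / 2) - (n + 1 - c) * (n - 2) + r
    else 2 * (n ^ 2 / 2) - (n + 1 - c - 1) * (n - 2) + 1 - r

/-- The set of rows to be swapped:
`S' = {r : r even, r ≤ (n-2)/2} ∪ {r : r odd, (n-2)/2 < r ≤ n-3}`. -/
def S' (n r : ℕ) : Prop :=
  (Even r ∧ r ≤ (n - 2) / 2) ∨ (Odd r ∧ (n - 2) / 2 < r ∧ r ≤ n - 3)

instance (n r : ℕ) : Decidable (S' n r) := by unfold S'; infer_instance

/-- The inner array: `G r c = B' r (n+1-c)` if `r ∈ S'`, and `G r c = B' r c` otherwise. -/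
def G (n r c : ℕ) : ℕ := if S' n r then B' n r (n + 1 - c) else B' n r c

/-- The first row of the singly-even construction, with `p = n²/2` and `m = n/2`:
`R₁ 1 = p+1`, `R₁ n = p+2`, `R₁ (m+2) = p+n-m`, `R₁ (m+3) = p+n-m-1`;
for `2 ≤ j ≤ m+1`, `R₁ j = p-n+j-1` if `j` even and `R₁ j = p+n+2-j` if `j` odd;
for `m+4 ≤ j ≤ n-1`, `R₁ j = p-n+j-1` if `j` odd and `R₁ j = p+n+2-j` if `j` even. -/
def R1 (n j : ℕ) : ℕ :=
  if j = 1 then n ^ 2 / 2 + 1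
  else if j = n then n ^ 2 / 2 + 2
  else if j = n / 2 + 2 then n ^ 2 / 2 + n - n / 2
  else if j = n / 2 + 3 then n ^ 2 / 2 + n - n / 2 - 1
  else if j ≤ n / 2 + 1 then
    if Even j then n ^ 2 / 2 - n + j - 1 else n ^ 2 / 2 + n + 2 - j
  else
    if Odd j then n ^ 2 / 2 - n + j - 1 else n ^ 2 / 2 + n + 2 - j

/-- The last row: `Rₙ j = n² + 1 - R₁ j`. -/
def Rn (n j : ℕ) : ℕ := n ^ 2 + 1 - R1 n j

/-- The complete singly-even array: first row `R₁`, last row `Rₙ`,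
and `F' r c = G (r-1) c` for `2 ≤ r ≤ n-1`. -/
def F' (n r c : ℕ) : ℕ :=
  if r = 1 then R1 n c else if r = n then Rn n c else G n (r - 1) c

/-!
Write `n = 4t + 2`, so that the inner array has `4t` rows. Column `c` of `G` reads column `c` of
`B'` on the rows outside `S'` and the mirrored column `n + 1 - c` on the rows in `S'`. Each column
of `B'` is affine in the row index, and `S'` is balanced: the signs `ε r = ±1` (`+1` on `S'`)
satisfy `∑ ε r = ∑ ε r * r = 0`, since `ε r = (-1)^r` on the lower half of the rows and
`-(-1)^r` on the upper half. Hence the column sum of `G` is half the sum of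
`B' r c + B' r (n + 1 - c)`, which is `n² + 1` plus a multiple of the centred index
`2r - (n - 1)`, whose sum over the rows vanishes.
-/

open Finset

theorem sum_Icc_two_mul_sub_succ (N : ℕ) :
    ∑ r ∈ Icc 1 N, (2 * (r : ℤ) - (N + 1)) = 0 := by
  induction N with
  | zero => simp
  | succ N ih =>
    rw [sum_Icc_succ_top (by omega)]
    have hshift : ∑ r ∈ Icc 1 N, (2 * (r : ℤ) - ((N + 1 : ℕ) + 1))
        = ∑ r ∈ Icc 1 N, (2 * (r : ℤ) - (N + 1)) - N := by
      rw [sum_sub_distrib, sum_sub_distrib, sum_const, sum_const, Nat.card_Icc]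
      push_cast; ring
    rw [hshift, ih]; push_cast; ring

theorem sum_Ioc_neg_one_pow_mul_affine {a : ℕ} (ha : Even a) (t : ℕ) (δ γ : ℤ) :
    ∑ r ∈ Ioc a (a + 2 * t), (-1) ^ r * (δ + γ * r) = t * γ := by
  induction t with
  | zero => simp
  | succ t ih =>
    have heven : Even (a + 2 * t) := ha.add (even_two_mul t)
    rw [show a + 2 * (t + 1) = a + 2 * t + 1 + 1 by ring,
      sum_Ioc_succ_top (by omega), sum_Ioc_succ_top (by omega), ih,
      heven.add_one.neg_one_pow, heven.add_one.add_one.neg_one_pow]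
    push_cast; ring

theorem S'_iff_even {t r : ℕ} (hr : r ≤ 2 * t) : S' (4 * t + 2) r ↔ Even r := by
  simp only [S', Nat.even_iff, Nat.odd_iff]; omega

theorem S'_iff_odd {t r : ℕ} (hr : 2 * t < r) (hr' : r ≤ 4 * t) :
    S' (4 * t + 2) r ↔ Odd r := by
  simp only [S', Nat.even_iff, Nat.odd_iff]; omega

theorem sum_sign_S'_mul_affine (t : ℕ) (δ γ : ℤ) :
    ∑ r ∈ Icc 1 (4 * t), (if S' (4 * t + 2) r then 1 else -1) * (δ + γ * r) = 0 := by
  have hlow : ∀ r ∈ Ioc 0 (2 * t),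
      (if S' (4 * t + 2) r then (1 : ℤ) else -1) * (δ + γ * r) = (-1) ^ r * (δ + γ * r) := by
    intro r hr
    rw [mem_Ioc] at hr
    by_cases he : Even r
    · rw [if_pos ((S'_iff_even (by omega)).2 he), he.neg_one_pow]
    · rw [if_neg (by rwa [S'_iff_even (by omega)]), (Nat.not_even_iff_odd.1 he).neg_one_pow]
  have hhigh : ∀ r ∈ Ioc (2 * t) (2 * t + 2 * t),
      (if S' (4 * t + 2) r then (1 : ℤ) else -1) * (δ + γ * r)
        = -((-1) ^ r * (δ + γ * r)) := by
    intro r hr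
    rw [mem_Ioc] at hr
    by_cases ho : Odd r
    · rw [if_pos ((S'_iff_odd (by omega) (by omega)).2 ho), ho.neg_one_pow]; ring
    · rw [if_neg (by rwa [S'_iff_odd (by omega) (by omega)]),
        (Nat.not_odd_iff_even.1 ho).neg_one_pow]; ring
  have hsplit : Icc 1 (4 * t) = Ioc 0 (2 * t + 2 * t) := by ext; simp; omega
  have hlow_sum := sum_Ioc_neg_one_pow_mul_affine Even.zero t δ γ
  rw [zero_add] at hlow_sum
  rw [hsplit, ← sum_Ioc_consecutive _ (by omega : 0 ≤ 2 * t) (by omega), sum_congr rfl hlow,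
    sum_congr rfl hhigh, sum_neg_distrib, hlow_sum,
    sum_Ioc_neg_one_pow_mul_affine (even_two_mul t), add_neg_cancel]

theorem four_mul_add_two_div_two (t : ℕ) : (4 * t + 2) / 2 = 2 * t + 1 := by omega

theorem four_mul_add_two_sq_div_two (t : ℕ) : (4 * t + 2) ^ 2 / 2 = 8 * t ^ 2 + 8 * t + 2 := by
  ring_nf; omega

theorem B'_odd_column {t k : ℕ} (hk : Odd k) (hkt : k ≤ 2 * t) (r : ℕ) :
    (B' (4 * t + 2) r k : ℤ) = (k - 1) * (4 * t) + r ∧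
      (B' (4 * t + 2) r (4 * t + 3 - k) : ℤ) = 16 * t ^ 2 + 16 * t + 4 - 4 * t * k + r := by
  have hle : k * (4 * t) ≤ 2 * (8 * t ^ 2 + 8 * t + 2) := by nlinarith
  constructor
  · simp only [B', four_mul_add_two_div_two, Nat.add_sub_cancel]
    rw [if_pos (by omega), if_pos hk]
    push_cast [hk.pos]; ring
  · simp only [B', four_mul_add_two_div_two, four_mul_add_two_sq_div_two, Nat.add_sub_cancel]
    rw [if_neg (by omega), if_neg (by omega), if_neg (by omega),
      show 4 * t + 2 + 1 - (4 * t + 3 - k) = k by omega, if_pos hk,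
      Nat.cast_add, Nat.cast_sub hle]
    push_cast; ring

theorem B'_even_column {t k r : ℕ} (hk : Even k) (hk0 : 1 ≤ k) (hkt : k ≤ 2 * t)
    (hr : r ≤ 4 * t) :
    (B' (4 * t + 2) r k : ℤ) = 4 * t * k + 1 - r ∧
      (B' (4 * t + 2) r (4 * t + 3 - k) : ℤ) = 16 * t ^ 2 + 16 * t + 5 - 4 * t * (k - 1) - r := by
  have hodd : ¬ Odd k := Nat.not_odd_iff_even.2 hk
  have hlo : r ≤ k * (4 * t) + 1 := by nlinarith
  have hk_pred : (k - 1) * (4 * t) ≤ 8 * t ^ 2 :=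
    calc (k - 1) * (4 * t) ≤ 2 * t * (4 * t) := Nat.mul_le_mul_right _ (by omega)
      _ = 8 * t ^ 2 := by ring
  have hle : (k - 1) * (4 * t) ≤ 2 * (8 * t ^ 2 + 8 * t + 2) := by omega
  have hhi : r ≤ 2 * (8 * t ^ 2 + 8 * t + 2) - (k - 1) * (4 * t) + 1 := by omega
  constructor
  · simp only [B', four_mul_add_two_div_two, Nat.add_sub_cancel]
    rw [if_pos (by omega), if_neg hodd, Nat.cast_sub hlo]
    push_cast; ring
  · simp only [B', four_mul_add_two_div_two, four_mul_add_two_sq_div_two, Nat.add_sub_cancel]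
    rw [if_neg (by omega), if_neg (by omega), if_neg (by omega),
      show 4 * t + 2 + 1 - (4 * t + 3 - k) = k by omega, if_neg hodd,
      Nat.cast_sub hhi, Nat.cast_add, Nat.cast_sub hle]
    push_cast [hk0]; ring

theorem B'_middle_columns {t r : ℕ} (hr : r ≤ 4 * t) :
    (B' (4 * t + 2) r (2 * t + 1) : ℤ) = 8 * t ^ 2 + r ∧
      (B' (4 * t + 2) r (2 * t + 2) : ℤ) = 8 * t ^ 2 + 16 * t + 5 - r := by
  have hval : 2 * (8 * t ^ 2 + 8 * t + 2) - 2 * t * (4 * t) + 1 - r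
      = 8 * t ^ 2 + 16 * t + 5 - r := by
    rw [show 2 * t * (4 * t) = 8 * t ^ 2 by ring]; omega
  constructor
  · simp only [B', four_mul_add_two_div_two, Nat.add_sub_cancel]
    rw [if_neg (by omega), if_pos trivial]
    push_cast; ring
  · simp only [B', four_mul_add_two_div_two, four_mul_add_two_sq_div_two, Nat.add_sub_cancel]
    rw [if_neg (by omega), if_neg (by omega), if_pos trivial, hval, Nat.cast_sub (by omega)]
    push_cast; ring

theorem sum_ite_S'_of_add_of_sub (t : ℕ) {f g : ℕ → ℤ} {C σ δ γ : ℤ}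
    (hadd : ∀ r ∈ Icc 1 (4 * t), f r + g r = C + σ * (2 * r - (4 * t + 1)))
    (hsub : ∀ r ∈ Icc 1 (4 * t), f r - g r = δ + γ * r) :
    ∑ r ∈ Icc 1 (4 * t), (if S' (4 * t + 2) r then g r else f r) = 2 * t * C := by
  have htwice : ∀ r ∈ Icc 1 (4 * t), 2 * (if S' (4 * t + 2) r then g r else f r)
      = C + σ * (2 * r - (4 * t + 1)) - (if S' (4 * t + 2) r then 1 else -1) * (δ + γ * r) := by
    intro r hr
    rw [← hadd r hr, ← hsub r hr]
    split_ifs <;> ring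
  have hcentred := sum_Icc_two_mul_sub_succ (4 * t)
  push_cast at hcentred
  have hsum : 2 * ∑ r ∈ Icc 1 (4 * t), (if S' (4 * t + 2) r then g r else f r)
      = 4 * t * C := by
    rw [mul_sum, sum_congr rfl htwice, sum_sub_distrib, sum_sign_S'_mul_affine, sum_add_distrib,
      ← mul_sum, hcentred, sum_const, Nat.card_Icc]
    push_cast; ring
  linarith

theorem B'_column_pair_of_le {t k : ℕ} (hk1 : 1 ≤ k) (hk : k ≤ 2 * t + 1) :
    (∃ σ : ℤ, ∀ r ∈ Icc 1 (4 * t),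
      (B' (4 * t + 2) r k : ℤ) + B' (4 * t + 2) r (4 * t + 3 - k)
        = 16 * t ^ 2 + 16 * t + 5 + σ * (2 * r - (4 * t + 1))) ∧
    (∃ δ γ : ℤ, ∀ r ∈ Icc 1 (4 * t),
      (B' (4 * t + 2) r k : ℤ) - B' (4 * t + 2) r (4 * t + 3 - k) = δ + γ * r) := by
  rcases hk.eq_or_lt with rfl | hk
  · rw [show 4 * t + 3 - (2 * t + 1) = 2 * t + 2 by omega]
    refine ⟨⟨0, fun r hr => ?_⟩, -16 * t - 5, 2, fun r hr => ?_⟩ <;>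
    · rw [mem_Icc] at hr
      obtain ⟨hlow, hhigh⟩ := B'_middle_columns (t := t) hr.2
      rw [hlow, hhigh]; ring
  rcases Nat.even_or_odd k with heven | hodd
  · refine ⟨⟨-1, fun r hr => ?_⟩,
      4 * t * k + 1 - (16 * t ^ 2 + 16 * t + 5 - 4 * t * (k - 1)), 0, fun r hr => ?_⟩ <;>
    · rw [mem_Icc] at hr
      obtain ⟨hlow, hhigh⟩ := B'_even_column heven hk1 (by omega) hr.2
      rw [hlow, hhigh]; ring
  · refine ⟨⟨1, fun r hr => ?_⟩, (k - 1) * (4 * t) - 16 * t ^ 2 - 16 * t - 4 + 4 * t * k, 0,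
      fun r hr => ?_⟩ <;>
    · obtain ⟨hlow, hhigh⟩ := B'_odd_column (t := t) hodd (by omega) r
      rw [hlow, hhigh]; ring

theorem sum_G_column {t c : ℕ} (hc : c ∈ Icc 1 (4 * t + 2)) :
    ∑ r ∈ Icc 1 (4 * t), (G (4 * t + 2) r c : ℤ) = 2 * t * (16 * t ^ 2 + 16 * t + 5) := by
  rw [mem_Icc] at hc
  have hG : ∀ r, (G (4 * t + 2) r c : ℤ)
      = if S' (4 * t + 2) r then (B' (4 * t + 2) r (4 * t + 3 - c) : ℤ)
        else B' (4 * t + 2) r c := by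
    intro r
    unfold G
    split_ifs <;> rfl
  simp_rw [hG]
  rcases le_or_gt c (2 * t + 1) with hc' | hc'
  · obtain ⟨⟨σ, hadd⟩, δ, γ, hsub⟩ := B'_column_pair_of_le hc.1 hc'
    exact sum_ite_S'_of_add_of_sub t hadd hsub
  · obtain ⟨⟨σ, hadd⟩, δ, γ, hsub⟩ := B'_column_pair_of_le (t := t) (k := 4 * t + 3 - c)
      (by omega) (by omega)
    rw [show 4 * t + 3 - (4 * t + 3 - c) = c by omega] at hadd hsub
    refine sum_ite_S'_of_add_of_sub t (σ := σ) (δ := -δ) (γ := -γ)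
      (fun r hr => ?_) (fun r hr => ?_)
    · rw [add_comm, hadd r hr]
    · rw [← neg_sub, hsub r hr]; ring

theorem singly_even_inner_column_sums_general (n : ℕ) (h2 : n % 4 = 2) :
    ∀ c ∈ Finset.Icc 1 n,
      ∑ r ∈ Finset.Icc 1 (n - 2), G n r c = (n / 2 - 1) * (n ^ 2 + 1) := by
  obtain ⟨t, rfl⟩ : ∃ t, n = 4 * t + 2 := ⟨n / 4, by omega⟩
  intro c hc
  rw [show 4 * t + 2 - 2 = 4 * t by omega, show (4 * t + 2) / 2 - 1 = 2 * t by omega]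
  zify
  rw [sum_G_column hc]
  ring

/-- Every column of the inner array `G` sums to `(n/2 - 1)(n² + 1)`. -/
theorem singly_even_inner_column_sums (n : ℕ) (h2 : n % 4 = 2) (hn : 6 ≤ n) :
    ∀ c ∈ Finset.Icc 1 n,
      ∑ r ∈ Finset.Icc 1 (n - 2), G n r c = (n / 2 - 1) * (n ^ 2 + 1) :=
  singly_even_inner_column_sums_general n h2
end

section
/- Both outer rows have the magic sum: ∑_{j=1}^{n} R₁(j) = n(n²+1)/2 and ∑_{j=1}^{n} Rₙ(j) = n(n²+1)/2. -/
/-! Apart from the entries at `1` and `m + 3` (`m = n/2` is odd), `R₁` splits into consecutive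
pairs `(j, j + 1)`, with `j` even in `[2, m + 1]` or odd in `[m + 4, n - 1]`, each summing to
`2p = n²`. The two leftover entries are `p + 1` and `p + m - 1`, so the row sum is
`(m - 1) n² + n² + m = n(n² + 1)/2`. Since `Rₙ = n² + 1 - R₁` entrywise, the sums of the two rows
add up to `n(n² + 1)`. -/

open Finset

theorem Finset.sum_Ico_add_two_mul_of_add_succ {M : Type*} [AddCommMonoid M] {f : ℕ → M}
    {a : ℕ} {c : M} (s : ℕ) (hf : ∀ k < s, f (a + 2 * k) + f (a + 2 * k + 1) = c) :
    ∑ i ∈ Ico a (a + 2 * s), f i = s • c := by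
  induction s with
  | zero => simp
  | succ s ih =>
    rw [show a + 2 * (s + 1) = a + 2 * s + 1 + 1 by ring, sum_Ico_succ_top (by omega),
      sum_Ico_succ_top (by omega), ih fun k hk => hf k (by omega), add_assoc, hf s (by omega),
      succ_nsmul]

lemma Nat.two_mul_sq_div_two_of_even {n : ℕ} (hn : Even n) : 2 * (n ^ 2 / 2) = n ^ 2 :=
  Nat.two_mul_div_two_of_even (hn.pow_of_ne_zero two_ne_zero)

lemma R1_add_R1_succ_of_even {n j : ℕ} (hn : Even n) (h4 : 4 ≤ n) (hj : Even j)
    (h2j : 2 ≤ j) (hjm : j ≤ n / 2 + 1) : R1 n j + R1 n (j + 1) = n ^ 2 := by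
  have hsq := Nat.two_mul_sq_div_two_of_even hn
  have hlarge : 4 * n ≤ n ^ 2 := by nlinarith
  rw [Nat.even_iff] at hn hj
  simp only [R1, Nat.even_iff, Nat.odd_iff]
  generalize n ^ 2 = N at *
  split_ifs <;> omega

lemma R1_add_R1_succ_of_odd {n j : ℕ} (hn : Even n) (hj : Odd j)
    (hmj : n / 2 + 4 ≤ j) (hjn : j ≤ n - 1) : R1 n j + R1 n (j + 1) = n ^ 2 := by
  have hsq := Nat.two_mul_sq_div_two_of_even hn
  have h4 : 4 ≤ n := by omega
  have hlarge : 4 * n ≤ n ^ 2 := by nlinarith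
  rw [Nat.even_iff] at hn
  rw [Nat.odd_iff] at hj
  simp only [R1, Nat.even_iff, Nat.odd_iff]
  generalize n ^ 2 = N at *
  split_ifs <;> omega

lemma R1_le_sq {n j : ℕ} (hn : 4 ≤ n) (hj : j ≤ n) : R1 n j ≤ n ^ 2 := by
  have hlarge : 4 * n ≤ n ^ 2 := by nlinarith
  simp only [R1]
  generalize n ^ 2 = N at *
  split_ifs <;> omega

lemma sum_Rn_add_sum_R1 {n : ℕ} (hn : 4 ≤ n) :
    ∑ j ∈ Icc 1 n, Rn n j + ∑ j ∈ Icc 1 n, R1 n j = n * (n ^ 2 + 1) := by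
  have hpair (j : ℕ) (hj : j ∈ Icc 1 n) : Rn n j + R1 n j = n ^ 2 + 1 :=
    Nat.sub_add_cancel (Nat.le_succ_of_le (R1_le_sq hn (mem_Icc.mp hj).2))
  rw [← sum_add_distrib, sum_congr rfl hpair, sum_const, Nat.card_Icc, smul_eq_mul,
    Nat.add_sub_cancel]

lemma sum_R1 {n : ℕ} (h2 : n % 4 = 2) (hn : 10 ≤ n) :
    ∑ j ∈ Icc 1 n, R1 n j = n * (n ^ 2 + 1) / 2 := by
  obtain ⟨s, rfl⟩ : ∃ s, n = 4 * s + 10 := ⟨n / 4 - 2, by omega⟩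
  have heven : Even (4 * s + 10) := ⟨2 * s + 5, by ring⟩
  have hlow : ∑ j ∈ Ico 2 (2 + 2 * (s + 3)), R1 (4 * s + 10) j = (s + 3) • (4 * s + 10) ^ 2 :=
    sum_Ico_add_two_mul_of_add_succ _ fun k hk =>
      R1_add_R1_succ_of_even heven (by omega) (by simp [parity_simps]) (by omega) (by omega)
  have hhigh : ∑ j ∈ Ico (2 * s + 9) (2 * s + 9 + 2 * (s + 1)), R1 (4 * s + 10) j
      = (s + 1) • (4 * s + 10) ^ 2 :=
    sum_Ico_add_two_mul_of_add_succ _ fun k hk =>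
      R1_add_R1_succ_of_odd heven (by simp [parity_simps]) (by omega) (by omega)
  have hone : R1 (4 * s + 10) 1 = (4 * s + 10) ^ 2 / 2 + 1 := if_pos rfl
  have hmid : R1 (4 * s + 10) (2 * s + 8) = (4 * s + 10) ^ 2 / 2 + 2 * s + 4 := by
    rw [R1, if_neg (by omega), if_neg (by omega), if_neg (by omega), if_pos (by omega)]
    omega
  have hsq : (4 * s + 10) ^ 2 / 2 = 2 * (2 * s + 5) ^ 2 := by
    rw [show (4 * s + 10) ^ 2 = 2 * (2 * (2 * s + 5) ^ 2) by ring]; omega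
  have htarget : (4 * s + 10) * ((4 * s + 10) ^ 2 + 1) / 2
      = (2 * s + 5) * ((4 * s + 10) ^ 2 + 1) := by
    rw [show 4 * s + 10 = 2 * (2 * s + 5) by ring, mul_assoc]; omega
  rw [← Ico_add_one_right_eq_Icc, sum_eq_sum_Ico_succ_bot (by omega),
    ← sum_Ico_consecutive _ (show 2 ≤ 2 + 2 * (s + 3) by omega) (show _ ≤ 4 * s + 10 + 1 by omega),
    hlow, show 2 + 2 * (s + 3) = 2 * s + 8 by ring,
    sum_eq_sum_Ico_succ_bot (show 2 * s + 8 < 4 * s + 10 + 1 by omega), hmid,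
    show 4 * s + 10 + 1 = 2 * s + 9 + 2 * (s + 1) by ring, hhigh, hone, htarget, hsq]
  simp only [smul_eq_mul]
  ring

/-- Both outer rows have the magic sum:
`∑_{j=1}^{n} R₁ j = n(n²+1)/2` and `∑_{j=1}^{n} Rₙ j = n(n²+1)/2`. -/
theorem outer_rows_sums (n : ℕ) (h2 : n % 4 = 2) (hn : 10 ≤ n) :
    (∑ j ∈ Finset.Icc 1 n, R1 n j = n * (n ^ 2 + 1) / 2) ∧
    (∑ j ∈ Finset.Icc 1 n, Rn n j = n * (n ^ 2 + 1) / 2) := by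
  have hR1 := sum_R1 h2 hn
  have hcompl := sum_Rn_add_sum_R1 (n := n) (by omega)
  have heven : 2 ∣ n * (n ^ 2 + 1) := Dvd.dvd.mul_right (by omega) _
  refine ⟨hR1, ?_⟩
  generalize n * (n ^ 2 + 1) = N at *
  omega
end

section
/- For every column index c ∈ {1,…,n}, the column sum ∑_{r=1}^{n} F'(r,c) equals n(n²+1)/2. -/
/-!
Write `n = 4t + 2`. In column `c` the first and last rows contribute `R₁ c + Rₙ c = n² + 1`.
Every column of `B'` is an arithmetic progression in the row index, so
`B' r c + B' (4t + 1 - r) c` is a constant `K c`. Both `S'` and its complement in `[1, 4t]`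
are unions of `t` pairs `{r, 4t + 1 - r}`, hence the middle rows contribute
`t • K (n + 1 - c) + t • K c`. Finally `K c + K (n + 1 - c) = 2 (n² + 1)`: the column
`n + 1 - c` is `n² + 1` minus a progression with the same reflection sum as column `c`.
Altogether the column sum is `(2t + 1)(n² + 1) = n (n² + 1) / 2`.
-/

open Finset

section Reflection

variable {M : Type*} [AddCommMonoid M] {t : ℕ} {x : ℕ → M} {K : M}

theorem sum_union_image_eq_card_smul {f g : ℕ → ℕ} (hf : Set.InjOn f (range t))
    (hg : Set.InjOn g (range t)) (hfg : Disjoint ((range t).image f) ((range t).image g))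
    (hx : ∀ i < t, x (f i) + x (g i) = K) :
    ∑ r ∈ (range t).image f ∪ (range t).image g, x r = t • K := by
  rw [sum_union hfg, sum_image hf, sum_image hg, ← sum_add_distrib,
    sum_congr rfl fun i hi => hx i (mem_range.1 hi), sum_const, card_range]

theorem filter_S'_eq (t : ℕ) :
    {r ∈ Icc 1 (4 * t) | S' (4 * t + 2) r} =
      (range t).image (fun i => 2 * i + 2) ∪ (range t).image (fun i => 4 * t - 1 - 2 * i) := by
  ext r
  simp only [mem_filter, mem_Icc, mem_union, mem_image, mem_range, S', Nat.even_iff,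
    Nat.odd_iff]
  constructor
  · rintro ⟨_, ⟨_, _⟩ | ⟨_, _, _⟩⟩
    · exact .inl ⟨r / 2 - 1, by omega, by omega⟩
    · exact .inr ⟨(4 * t - 1 - r) / 2, by omega, by omega⟩
  · rintro (⟨i, _, rfl⟩ | ⟨i, _, rfl⟩) <;> omega

theorem filter_not_S'_eq (t : ℕ) :
    {r ∈ Icc 1 (4 * t) | ¬S' (4 * t + 2) r} =
      (range t).image (fun i => 2 * i + 1) ∪ (range t).image (fun i => 4 * t - 2 * i) := by
  ext r
  simp only [mem_filter, mem_Icc, mem_union, mem_image, mem_range, S', Nat.even_iff,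
    Nat.odd_iff]
  constructor
  · rintro ⟨_, h⟩
    by_cases hr : r ≤ 2 * t
    · exact .inl ⟨r / 2, by omega, by omega⟩
    · exact .inr ⟨(4 * t - r) / 2, by omega, by omega⟩
  · rintro (⟨i, _, rfl⟩ | ⟨i, _, rfl⟩) <;> omega

theorem sum_filter_S'_of_reflect (hx : ∀ r ∈ Icc 1 (4 * t), x r + x (4 * t + 1 - r) = K) :
    ∑ r ∈ Icc 1 (4 * t) with S' (4 * t + 2) r, x r = t • K := by
  rw [filter_S'_eq]
  refine sum_union_image_eq_card_smul (fun i _ j _ h => by omega)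
    (fun i hi j hj h => by simp only [coe_range, Set.mem_Iio] at hi hj; omega)
    (disjoint_left.2 ?_) fun i hi => ?_
  · simp only [mem_image, mem_range]; omega
  · rw [show 4 * t - 1 - 2 * i = 4 * t + 1 - (2 * i + 2) by omega]
    exact hx _ (mem_Icc.2 ⟨by omega, by omega⟩)

theorem sum_filter_not_S'_of_reflect (hx : ∀ r ∈ Icc 1 (4 * t), x r + x (4 * t + 1 - r) = K) :
    ∑ r ∈ Icc 1 (4 * t) with ¬S' (4 * t + 2) r, x r = t • K := by
  rw [filter_not_S'_eq]
  refine sum_union_image_eq_card_smul (fun i _ j _ h => by omega)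
    (fun i hi j hj h => by simp only [coe_range, Set.mem_Iio] at hi hj; omega)
    (disjoint_left.2 ?_) fun i hi => ?_
  · simp only [mem_image, mem_range]; omega
  · rw [show 4 * t - 2 * i = 4 * t + 1 - (2 * i + 1) by omega]
    exact hx _ (mem_Icc.2 ⟨by omega, by omega⟩)

end Reflection

section Base

variable {t r : ℕ}

theorem B'_of_le {c : ℕ} (hc : c ∈ Icc 1 (2 * t + 1)) (hr : r ≤ 4 * t + 1) :
    (B' (4 * t + 2) r c : ℤ) =
      if Odd c then ((c : ℤ) - 1) * (4 * t) + r else (c : ℤ) * (4 * t) + 1 - r := by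
  rw [mem_Icc] at hc
  simp only [B', show (4 * t + 2) / 2 = 2 * t + 1 by omega, show 4 * t + 2 - 2 = 4 * t by omega]
  obtain hc' | rfl := Nat.lt_or_eq_of_le hc.2
  · have hrc : 4 * t ≤ c * (4 * t) := Nat.le_mul_of_pos_left _ hc.1
    rw [if_pos (by omega)]
    split_ifs
    · push_cast [Nat.cast_sub hc.1]; ring
    · push_cast [Nat.cast_sub (by omega : r ≤ c * (4 * t) + 1)]; ring
  · rw [if_neg (by omega), if_pos rfl, if_pos (odd_two_mul_add_one t)]
    push_cast; ring

theorem B'_mirror {k : ℕ} (hk : k ∈ Icc 1 (2 * t + 1)) (hr : r ≤ 4 * t + 1) :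
    (B' (4 * t + 2) r (4 * t + 2 + 1 - k) : ℤ) = (4 * t + 2) ^ 2 + 1 -
      if Even k ∨ k = 2 * t + 1 then ((k : ℤ) - 1) * (4 * t) + r
      else (k : ℤ) * (4 * t) + 1 - r := by
  rw [mem_Icc] at hk
  have hp : 2 * ((4 * t + 2) ^ 2 / 2) = (4 * t + 2) ^ 2 := 
    Nat.mul_div_cancel' (dvd_pow ⟨2 * t + 1, by ring⟩ two_ne_zero)
  have hmul : k * (4 * t) ≤ (4 * t + 2) ^ 2 := by nlinarith
  have hmul_pred : (k - 1) * (4 * t) + 4 * t ≤ (4 * t + 2) ^ 2 := by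
    rw [← Nat.succ_mul, Nat.succ_eq_add_one, Nat.sub_add_cancel hk.1]; exact hmul
  have hpred : (k - 1) * (4 * t) ≤ (4 * t + 2) ^ 2 := (Nat.le_add_right _ _).trans hmul_pred
  have hr' : r ≤ (4 * t + 2) ^ 2 - (k - 1) * (4 * t) + 1 := by omega
  simp only [B', show (4 * t + 2) / 2 = 2 * t + 1 by omega, show 4 * t + 2 - 2 = 4 * t by omega,
    hp, if_neg (show ¬ 4 * t + 2 + 1 - k ≤ 2 * t + 1 - 1 by omega),
    if_neg (show 4 * t + 2 + 1 - k ≠ 2 * t + 1 by omega),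
    show 4 * t + 2 + 1 - (4 * t + 2 + 1 - k) = k by omega]
  obtain hk' | hk' := Nat.lt_or_eq_of_le hk.2
  · rw [if_neg (by omega)]
    rcases Nat.even_or_odd k with hev | hodd
    · rw [if_neg (Nat.not_odd_iff_even.2 hev), if_pos (.inl hev)]
      push_cast [Nat.cast_sub hr', Nat.cast_sub hpred, Nat.cast_sub hk.1]
      ring
    · rw [if_pos hodd, if_neg (not_or.2 ⟨Nat.not_even_iff_odd.2 hodd, by omega⟩)]
      push_cast [Nat.cast_sub hmul]
      ring
  · rw [if_pos (by omega), if_pos (.inr hk'), show 2 * t + 1 - 1 = k - 1 by omega]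
    push_cast [Nat.cast_sub hr', Nat.cast_sub hpred, Nat.cast_sub hk.1]
    ring

theorem B'_add_B'_reflect {c : ℕ} (hc : c ∈ Icc 1 (4 * t + 2)) (hr : r ≤ 4 * t + 1) :
    B' (4 * t + 2) r c + B' (4 * t + 2) (4 * t + 1 - r) c =
      B' (4 * t + 2) 1 c + B' (4 * t + 2) (4 * t) c := by
  zify
  rw [mem_Icc] at hc
  rcases le_or_gt c (2 * t + 1) with hc' | hc'
  · have hc' : c ∈ Icc 1 (2 * t + 1) := mem_Icc.2 ⟨hc.1, hc'⟩
    rw [B'_of_le hc' hr, B'_of_le hc' (by omega), B'_of_le hc' (by omega),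
      B'_of_le hc' (by omega)]
    split_ifs <;> push_cast [Nat.cast_sub hr] <;> ring
  · obtain ⟨k, hk, rfl⟩ : ∃ k ∈ Icc 1 (2 * t + 1), c = 4 * t + 2 + 1 - k :=
      ⟨4 * t + 2 + 1 - c, mem_Icc.2 ⟨by omega, by omega⟩, by omega⟩
    rw [B'_mirror hk hr, B'_mirror hk (by omega), B'_mirror hk (by omega),
      B'_mirror hk (by omega)]
    split_ifs <;> push_cast [Nat.cast_sub hr] <;> ring

theorem B'_ends_add_mirror {c : ℕ} (hc : c ∈ Icc 1 (4 * t + 2)) :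
    B' (4 * t + 2) 1 c + B' (4 * t + 2) (4 * t) c +
      (B' (4 * t + 2) 1 (4 * t + 2 + 1 - c) + B' (4 * t + 2) (4 * t) (4 * t + 2 + 1 - c)) =
      2 * ((4 * t + 2) ^ 2 + 1) := by
  have key : ∀ k ∈ Icc 1 (2 * t + 1), B' (4 * t + 2) 1 k + B' (4 * t + 2) (4 * t) k +
      (B' (4 * t + 2) 1 (4 * t + 2 + 1 - k) + B' (4 * t + 2) (4 * t) (4 * t + 2 + 1 - k)) =
      2 * ((4 * t + 2) ^ 2 + 1) := fun k hk => by
    zify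
    rw [B'_of_le hk (by omega), B'_of_le hk (by omega), B'_mirror hk (by omega),
      B'_mirror hk (by omega)]
    -- `(k - 1) * 4t + r` and `k * 4t + 1 - r` have the same reflection sum, so every branch closes
    split_ifs <;> push_cast <;> ring
  rw [mem_Icc] at hc
  rcases le_or_gt c (2 * t + 1) with hc' | hc'
  · exact key c (mem_Icc.2 ⟨hc.1, hc'⟩)
  · have := key (4 * t + 2 + 1 - c) (mem_Icc.2 ⟨by omega, by omega⟩)
    rwa [show 4 * t + 2 + 1 - (4 * t + 2 + 1 - c) = c by omega, add_comm] at this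

end Base

theorem R1_le {n j : ℕ} (hj : j ∈ Icc 1 n) : R1 n j ≤ n ^ 2 + 1 := by
  rw [mem_Icc] at hj
  have h₁ : n ≤ n ^ 2 := Nat.le_self_pow two_ne_zero n
  have h₂ : 2 * n ≤ n ^ 2 + 1 := by nlinarith
  unfold R1
  split_ifs <;> omega

theorem R1_add_Rn {n j : ℕ} (hj : j ∈ Icc 1 n) : R1 n j + Rn n j = n ^ 2 + 1 :=
  Nat.add_sub_cancel' (R1_le hj)

theorem sum_F'_eq_add_sum_G {n : ℕ} (hn : 2 ≤ n) (c : ℕ) :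
    ∑ r ∈ Icc 1 n, F' n r c = R1 n c + Rn n c + ∑ r ∈ Icc 1 (n - 2), G n r c := by
  obtain ⟨k, rfl⟩ : ∃ k, n = k + 2 := ⟨n - 2, by omega⟩
  have hmid : ∀ r ∈ Icc 1 k, F' (k + 2) (r + 1) c = G (k + 2) r c := fun r hr => by
    rw [mem_Icc] at hr
    rw [F', if_neg (by omega), if_neg (by omega), Nat.add_sub_cancel]
  rw [sum_Icc_succ_top (by omega), Icc_eq_cons_Ioc (by omega), sum_cons,
    ← Icc_add_one_left_eq_Ioc, ← map_add_right_Icc 1 k 1, sum_map, Nat.add_sub_cancel]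
  simp only [addRightEmbedding_apply]
  rw [sum_congr rfl hmid, F', if_pos rfl, F', if_neg (by omega), if_pos rfl]
  ring

theorem singly_even_column_sums_general (n : ℕ) (h2 : n % 4 = 2) :
    ∀ c ∈ Finset.Icc 1 n, ∑ r ∈ Finset.Icc 1 n, F' n r c = n * (n ^ 2 + 1) / 2 := by
  obtain ⟨t, rfl⟩ : ∃ t, n = 4 * t + 2 := ⟨n / 4, by omega⟩
  intro c hc
  have hreflect : ∀ c' ∈ Icc 1 (4 * t + 2), ∀ r ∈ Icc 1 (4 * t),
      B' (4 * t + 2) r c' + B' (4 * t + 2) (4 * t + 1 - r) c' =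
        B' (4 * t + 2) 1 c' + B' (4 * t + 2) (4 * t) c' :=
    fun c' hc' r hr => B'_add_B'_reflect hc' ((mem_Icc.1 hr).2.trans (Nat.le_succ _))
  have hmirror : 4 * t + 2 + 1 - c ∈ Icc 1 (4 * t + 2) := by
    rw [mem_Icc] at hc ⊢; omega
  rw [sum_F'_eq_add_sum_G (by omega), R1_add_Rn hc, Nat.add_sub_cancel]
  simp only [G]
  rw [sum_ite, sum_filter_S'_of_reflect (hreflect _ hmirror),
    sum_filter_not_S'_of_reflect (hreflect _ hc), smul_eq_mul, smul_eq_mul]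
  refine (Nat.div_eq_of_eq_mul_left two_pos ?_).symm
  linear_combination (2 * t) * (B'_ends_add_mirror hc).symm

/-- Every column of `F'` sums to `n(n²+1)/2`. -/
theorem singly_even_column_sums (n : ℕ) (h2 : n % 4 = 2) (hn : 10 ≤ n) :
    ∀ c ∈ Finset.Icc 1 n, ∑ r ∈ Finset.Icc 1 n, F' n r c = n * (n ^ 2 + 1) / 2 :=
  singly_even_column_sums_general n h2
end
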